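/- Fix integers r ≥ 1 and t ≥ 2, and fix a t-core ρ ∈ Par_{r,rt} with a_i = a_i(ρ) for 0 ≤ i ≤ t−1 (every t-core with at most r parts lies in Par_{r,rt}). Then lim_{s→∞} #{λ ∈ Par_{r,s} : core_t(λ) = ρ} / C(r+s, r) = (1/t^r) · r!/(a_0! a_1! ··· a_{t−1}!). -/

import Mathlib

open Finset

/-- Partitions in the `r × s` rectangle: weakly decreasing `r`-tuples with parts at most `s`. -/
def IsRectPartition (r s : ℕ) (lam : Fin r → ℕ) : Prop :=
  (∀ i j : Fin r, i ≤ j → lam j ≤ lam i) ∧ ∀ i, lam i ≤ s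

/-- The beta-set `β(λ) = {λ_i + r − i : 1 ≤ i ≤ r}` (with 0-indexed `i`). -/
def betaSet (r : ℕ) (lam : Fin r → ℕ) : Finset ℕ :=
  Finset.image (fun i : Fin r => lam i + (r - 1 - (i : ℕ))) Finset.univ

/-- `λ` is a `t`-core: for every `b ∈ β(λ)` with `b ≥ t`, also `b − t ∈ β(λ)`. -/
def IsTCore (r t : ℕ) (lam : Fin r → ℕ) : Prop :=
  ∀ b ∈ betaSet r lam, t ≤ b → b - t ∈ betaSet r lam

/-- `n_i = ⌊(r+s+t−1−i)/t⌋`. -/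
def nres (r s t i : ℕ) : ℕ := (r + s + t - 1 - i) / t

/-- `a_i(λ) = #{b ∈ β(λ) : b ≡ i (mod t)}`. -/
def aCount (r t : ℕ) (lam : Fin r → ℕ) (i : ℕ) : ℕ :=
  ((betaSet r lam).filter fun b => b % t = i).card

/-- The justification `J(λ)`: in each residue class `i` mod `t`, the `a_i(λ)` smallest
nonnegative integers congruent to `i`. -/
def justification (r t : ℕ) (lam : Fin r → ℕ) : Finset ℕ :=
  (Finset.range t).biUnion fun i =>
    (Finset.range (aCount r t lam i)).image fun m => i + m * t

/-- The size of the `t`-core of `λ`: `Σ_{b ∈ J(λ)} b − r(r−1)/2`. -/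
def coreSize (r t : ℕ) (lam : Fin r → ℕ) : ℕ :=
  (∑ b ∈ justification r t lam, b) - r * (r - 1) / 2

/-!
Because `ρ` is a `t`-core, each residue class of `β(ρ)` is an initial segment of its arithmetic
progression, so `β(ρ) = J(ρ)`, and `J(λ) = β(ρ)` says exactly that `a_i(λ) = a_i(ρ)` for all `i`.
Through `λ ↦ β(λ)`, `Par_{r,s}` is in bijection with the `r`-subsets of `{0, …, r+s−1}`; hence the
count is `∏ C(n_i, a_i)`, where `n_i ~ (r+s)/t` is the size of the `i`-th residue class. Writing
binomials as falling factorials over factorials,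
`∏ C(n_i, a_i) / C(r+s, r) ~ ∏ (n_i/(r+s))^{a_i} · r!/∏ a_i! → t^{-r} · r!/∏ a_i!`.
-/

open Filter Topology

lemma tendsto_natCast_sub_div {n N : ℕ → ℕ} {c : ℝ} (hN : Tendsto N atTop atTop)
    (hn : Tendsto (fun s => (n s : ℝ) / N s) atTop (𝓝 c)) (j : ℕ) :
    Tendsto (fun s => ((n s - j : ℕ) : ℝ) / N s) atTop (𝓝 c) := by
  have hlower : Tendsto (fun s => ((n s : ℝ) - j) / N s) atTop (𝓝 c) := by
    have hj := (tendsto_const_nhds (x := (j : ℝ))).div_atTop (tendsto_natCast_atTop_atTop.comp hN)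
    simpa only [sub_div, sub_zero, Function.comp_apply] using hn.sub hj
  refine tendsto_of_tendsto_of_tendsto_of_le_of_le hlower hn (fun s => ?_) (fun s => ?_)
  · gcongr
    exact sub_le_iff_le_add.mpr (by rw [← Nat.cast_add]; exact Nat.cast_le.mpr (by omega))
  · gcongr
    exact Nat.sub_le _ _

lemma tendsto_descFactorial_div_pow {n N : ℕ → ℕ} {c : ℝ} (hN : Tendsto N atTop atTop)
    (hn : Tendsto (fun s => (n s : ℝ) / N s) atTop (𝓝 c)) (a : ℕ) :
    Tendsto (fun s => ((n s).descFactorial a : ℝ) / (N s : ℝ) ^ a) atTop (𝓝 (c ^ a)) := by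
  have h := tendsto_finsetProd (range a) fun j _ => tendsto_natCast_sub_div hN hn j
  simp only [prod_const, card_range] at h
  refine h.congr fun s => ?_
  rw [Nat.descFactorial_eq_prod_range, Nat.cast_prod, prod_div_distrib, prod_const, card_range]

open Nat in
lemma tendsto_prod_choose_div_choose {ι : Type*} (I : Finset ι) (a : ι → ℕ) {n : ι → ℕ → ℕ}
    {N : ℕ → ℕ} {c : ι → ℝ} (hN : Tendsto N atTop atTop)
    (hn : ∀ i ∈ I, Tendsto (fun s => (n i s : ℝ) / N s) atTop (𝓝 (c i))) :
    Tendsto (fun s => (∏ i ∈ I, ((n i s).choose (a i) : ℝ)) / (N s).choose (∑ i ∈ I, a i))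
      atTop (𝓝 ((∏ i ∈ I, c i ^ a i) * ((∑ i ∈ I, a i)! / ∏ i ∈ I, ((a i)! : ℝ)))) := by
  set r := ∑ i ∈ I, a i with hr
  have hself : Tendsto (fun s => (N s : ℝ) / N s) atTop (𝓝 1) :=
    tendsto_const_nhds.congr' <| (hN.eventually_gt_atTop 0).mono fun s hs =>
      (div_self (by positivity)).symm
  have hnum := tendsto_finsetProd I fun i hi => tendsto_descFactorial_div_pow hN (hn i hi) (a i)
  have hden := tendsto_descFactorial_div_pow hN hself r
  rw [one_pow] at hden
  have h := (hnum.div hden one_ne_zero).mul_const ((r ! : ℝ) / ∏ i ∈ I, ((a i)! : ℝ))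
  rw [div_one] at h
  refine h.congr' <| (hN.eventually_ge_atTop (max r 1)).mono fun s hs => ?_
  have hcast (m k : ℕ) : (m.choose k : ℝ) = m.descFactorial k / k ! := by
    rw [descFactorial_eq_factorial_mul_choose, cast_mul]
    field_simp
  have hNpos : (0 : ℝ) < N s := by exact_mod_cast (le_max_right r 1).trans hs
  have hD : (0 : ℝ) < (N s).descFactorial r := by
    exact_mod_cast descFactorial_pos.mpr ((le_max_left r 1).trans hs)
  simp only [Pi.div_apply, hcast, prod_div_distrib]
  rw [prod_pow_eq_pow_sum, ← hr]
  field_simp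

lemma card_filter_mod_eq {t i : ℕ} (ht : 0 < t) (hi : i < t) (N : ℕ) :
    #{x ∈ range N | x % t = i} = N / t + if i < N % t then 1 else 0 := by
  rw [← Nat.mod_eq_of_lt hi, ← Nat.count_modEq_card N ht, Nat.count_eq_card_filter_range]
  rfl

lemma abs_card_filter_mod_sub_div_le {t i : ℕ} (ht : 0 < t) (hi : i < t) (N : ℕ) :
    |(#{x ∈ range N | x % t = i} : ℝ) - N / t| ≤ 1 := by
  set c := #{x ∈ range N | x % t = i} with hc
  have hle : t * c ≤ N + t ∧ N ≤ t * c + t := by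
    have h1 := Nat.div_add_mod N t
    have h2 := Nat.mod_lt N ht
    rw [hc, card_filter_mod_eq ht hi, mul_add]
    generalize t * (N / t) = p at *
    split_ifs <;> omega
  have htR : (0 : ℝ) < t := by exact_mod_cast ht
  have hc1 : (t : ℝ) * c ≤ N + t := by exact_mod_cast hle.1
  have hc2 : (N : ℝ) ≤ t * c + t := by exact_mod_cast hle.2
  rw [show (c : ℝ) - N / t = (t * c - N) / t by field_simp, abs_div, abs_of_pos htR,
    div_le_one htR, abs_le]
  constructor <;> linarith

lemma tendsto_card_filter_mod_div {t i : ℕ} (ht : 0 < t) (hi : i < t) :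
    Tendsto (fun N : ℕ => (#{x ∈ range N | x % t = i} : ℝ) / N) atTop (𝓝 (1 / t)) := by
  have hsmall : Tendsto (fun N : ℕ => ((#{x ∈ range N | x % t = i} : ℝ) - N / t) / N)
      atTop (𝓝 0) :=
    squeeze_zero_norm (fun N => by
      rw [norm_div, Real.norm_natCast, Real.norm_eq_abs]
      exact div_le_div_of_nonneg_right (abs_card_filter_mod_sub_div_le ht hi N) N.cast_nonneg)
      tendsto_one_div_atTop_nhds_zero_nat
  have h := hsmall.const_add (1 / (t : ℝ))
  rw [add_zero] at h
  refine h.congr' <| (eventually_gt_atTop 0).mono fun N hN => ?_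
  have htR : (t : ℝ) ≠ 0 := by positivity
  have hNR : (N : ℝ) ≠ 0 := by positivity
  field_simp
  ring

lemma add_mul_mod_of_lt {t i : ℕ} (hi : i < t) (m : ℕ) : (i + m * t) % t = i := by
  rw [Nat.add_mul_mod_self_right, Nat.mod_eq_of_lt hi]

lemma card_eq_sum_card_filter_mod {t : ℕ} (ht : 0 < t) (S : Finset ℕ) :
    #S = ∑ i ∈ range t, #{x ∈ S | x % t = i} :=
  card_eq_sum_card_fiberwise fun x _ => mem_range.mpr (Nat.mod_lt x ht)

lemma filter_biUnion_univ_eq {α ι : Type*} [DecidableEq α] [Fintype ι] [DecidableEq ι]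
    {f : α → ι} {c : ι → Finset α} (hc : ∀ i, ∀ x ∈ c i, f x = i) (i : ι) :
    {x ∈ univ.biUnion c | f x = i} = c i := by
  ext x
  simp only [mem_filter, mem_biUnion, mem_univ, true_and]
  refine ⟨fun ⟨⟨j, hj⟩, hx⟩ => ?_, fun hx => ⟨⟨i, hx⟩, hc i x hx⟩⟩
  rwa [← hx, hc j x hj]

lemma card_filter_powerset_fiber_card_eq {α ι : Type*} [DecidableEq α] [Fintype ι]
    [DecidableEq ι] (S : Finset α) (f : α → ι) (k : ι → ℕ) :
    #{B ∈ S.powerset | ∀ i, #{x ∈ B | f x = i} = k i}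
      = ∏ i, (#{x ∈ S | f x = i}).choose (k i) := by
  simp_rw [← card_powersetCard, ← Fintype.card_piFinset]
  refine card_nbij' (fun B i => {x ∈ B | f x = i}) (fun c => univ.biUnion c) ?_ ?_ ?_ ?_
  · intro B hB
    simp only [mem_coe, mem_filter, mem_powerset, Fintype.mem_piFinset, mem_powersetCard] at hB ⊢
    exact fun i => ⟨filter_subset_filter _ hB.1, hB.2 i⟩
  · intro c hc
    simp only [mem_coe, Fintype.mem_piFinset, mem_powersetCard, subset_iff, mem_filter] at hc
    simp only [mem_coe, mem_filter, mem_powerset,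
      filter_biUnion_univ_eq fun i x hx => ((hc i).1 hx).2]
    refine ⟨fun x hx => ?_, fun i => (hc i).2⟩
    obtain ⟨i, -, hx⟩ := mem_biUnion.mp hx
    exact ((hc i).1 hx).1
  · intro B _
    exact biUnion_filter_eq_of_maps_to fun _ _ => mem_univ _
  · intro c hc
    simp only [mem_coe, Fintype.mem_piFinset, mem_powersetCard, subset_iff, mem_filter] at hc
    exact funext <| filter_biUnion_univ_eq fun i x hx => ((hc i).1 hx).2

lemma card_filter_powersetCard_mod_card_eq {t : ℕ} (ht : 0 < t) (S : Finset ℕ) {a : ℕ → ℕ}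
    {r : ℕ} (ha : ∑ i ∈ range t, a i = r) :
    #{B ∈ S.powersetCard r | ∀ i < t, #{x ∈ B | x % t = i} = a i}
      = ∏ i ∈ range t, (#{x ∈ S | x % t = i}).choose (a i) := by
  let f : ℕ → Fin t := fun x => ⟨x % t, Nat.mod_lt x ht⟩
  have hf (B : Finset ℕ) (i : Fin t) : {x ∈ B | f x = i} = {x ∈ B | x % t = i} := by
    simp only [f, Fin.ext_iff]
  have h := card_filter_powerset_fiber_card_eq S f (fun i => a i)
  simp only [hf] at h
  rw [← Fin.prod_univ_eq_prod_range (fun i => (#{x ∈ S | x % t = i}).choose (a i)), ← h,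
    powersetCard_eq_filter, filter_filter]
  refine congrArg card (filter_congr fun B _ => ?_)
  rw [Fin.forall_iff, and_iff_right_iff_imp]
  intro hB
  rw [card_eq_sum_card_filter_mod ht, ← ha]
  exact sum_congr rfl fun i hi => hB i (mem_range.mp hi)

lemma StrictMono.add_sub_le_of_le {n : ℕ} {f : Fin n → ℕ} (hf : StrictMono f) {i j : Fin n}
    (hij : i ≤ j) : f i + (j - i : ℕ) ≤ f j := by
  have h := card_le_card_of_injOn f (s := Icc i j) (t := Icc (f i) (f j))
    (fun k hk => by
      rw [coe_Icc] at hk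
      exact mem_Icc.mpr ⟨hf.monotone hk.1, hf.monotone hk.2⟩)
    hf.injective.injOn
  rw [Fin.card_Icc, Nat.card_Icc] at h
  have := hf.monotone hij
  omega

section BetaSet

variable {r s : ℕ}

def betaNumbers (r : ℕ) (lam : Fin r → ℕ) (i : Fin r) : ℕ := lam i + (r - 1 - i)

lemma betaSet_eq_image (lam : Fin r → ℕ) : betaSet r lam = univ.image (betaNumbers r lam) := rfl

lemma strictAnti_betaNumbers {lam : Fin r → ℕ} (hlam : Antitone lam) :
    StrictAnti (betaNumbers r lam) := fun i j hij => by
  have := hlam hij.le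
  have : (i : ℕ) < j := hij
  have := j.isLt
  simp only [betaNumbers]
  omega

lemma card_betaSet {lam : Fin r → ℕ} (hlam : Antitone lam) : #(betaSet r lam) = r := by
  rw [betaSet_eq_image, card_image_of_injective _ (strictAnti_betaNumbers hlam).injective,
    card_univ, Fintype.card_fin]

lemma betaSet_mem_powersetCard {lam : Fin r → ℕ} (hlam : IsRectPartition r s lam) :
    betaSet r lam ∈ (range (r + s)).powersetCard r := by
  refine mem_powersetCard.mpr ⟨fun b hb => ?_, card_betaSet hlam.1⟩
  obtain ⟨i, -, rfl⟩ := mem_image.mp hb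
  have := hlam.2 i
  have := i.isLt
  exact mem_range.mpr (by omega)

lemma betaSet_injOn : Set.InjOn (betaSet r) {lam | Antitone lam} := fun lam hlam mu hmu h => by
  have hrange : Set.range (betaNumbers r lam) = Set.range (betaNumbers r mu) := by
    simpa only [betaSet_eq_image, coe_image, coe_univ, Set.image_univ] using
      congrArg (fun S : Finset ℕ => (S : Set ℕ)) h
  funext i
  have := congrFun (((strictAnti_betaNumbers hlam).range_inj (strictAnti_betaNumbers hmu)).mp
    hrange) i
  simpa only [betaNumbers, Nat.add_right_cancel_iff] using this

lemma exists_isRectPartition_betaSet_eq {B : Finset ℕ}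
    (hB : B ∈ (range (r + s)).powersetCard r) :
    ∃ lam, IsRectPartition r s lam ∧ betaSet r lam = B := by
  obtain ⟨hsub, hcard⟩ := mem_powersetCard.mp hB
  set g := B.orderEmbOfFin hcard
  have hrev (i : Fin r) : (i.rev : ℕ) = r - 1 - i := by rw [Fin.val_rev]; omega
  have hge (k : Fin r) : (k : ℕ) ≤ g k := by
    have := g.strictMono.add_sub_le_of_le (show (⟨0, k.pos⟩ : Fin r) ≤ k from Nat.zero_le _)
    simp only [Nat.sub_zero] at this
    omega
  have hgap {i j : Fin r} (hij : i ≤ j) : g i + (j - i : ℕ) ≤ g j :=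
    g.strictMono.add_sub_le_of_le hij
  have hbeta (i : Fin r) : g i.rev - (r - 1 - i) + (r - 1 - i) = g i.rev := by
    have := hge i.rev
    have := hrev i
    omega
  refine ⟨fun i => g i.rev - (r - 1 - i), ⟨fun i j hij => ?_, fun i => ?_⟩, ?_⟩
  · have := hgap (Fin.rev_le_rev.mpr hij)
    have := hge j.rev
    have := hrev i
    have := hrev j
    have : (i : ℕ) ≤ j := hij
    dsimp only
    omega
  · let last : Fin r := ⟨r - 1, by have := i.isLt; omega⟩
    have hlast : g last < r + s := mem_range.mp <| hsub <| B.orderEmbOfFin_mem hcard last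
    have : (last : ℕ) = r - 1 := rfl
    have := hgap (show i.rev ≤ last from Nat.le_sub_one_of_lt i.rev.isLt)
    have := hrev i
    dsimp only
    omega
  · calc betaSet r _ = univ.image (g ∘ Fin.rev) := image_congr fun i _ => hbeta i
      _ = (univ.image Fin.rev).image g := image_image.symm
      _ = B := by rw [image_univ_of_surjective Fin.rev_surjective, image_orderEmbOfFin_univ]

lemma ncard_isRectPartition_betaSet (P : Finset ℕ → Prop) [DecidablePred P] :
    {lam | IsRectPartition r s lam ∧ P (betaSet r lam)}.ncard
      = #{B ∈ (range (r + s)).powersetCard r | P B} := by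
  rw [← Set.ncard_coe_finset]
  refine Set.ncard_congr (fun lam _ => betaSet r lam) (fun lam hlam => ?_)
    (fun lam mu hlam hmu h => betaSet_injOn hlam.1.1 hmu.1.1 h) (fun B hB => ?_)
  · exact mem_filter.mpr ⟨betaSet_mem_powersetCard hlam.1, hlam.2⟩
  · obtain ⟨hB, hP⟩ := mem_filter.mp hB
    obtain ⟨lam, hlam, rfl⟩ := exists_isRectPartition_betaSet_eq hB
    exact ⟨lam, ⟨hlam, hP⟩, rfl⟩

end BetaSet

section Justification

variable {r t : ℕ}

lemma filter_mod_justification (lam : Fin r → ℕ) {i : ℕ} (hi : i < t) :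
    {x ∈ justification r t lam | x % t = i} = (range (aCount r t lam i)).image (i + · * t) := by
  ext x
  simp only [justification, mem_filter, mem_biUnion, mem_range, mem_image]
  constructor
  · rintro ⟨⟨j, hj, m, hm, rfl⟩, hmod⟩
    rw [add_mul_mod_of_lt hj] at hmod
    exact ⟨m, hmod ▸ hm, hmod ▸ rfl⟩
  · rintro ⟨m, hm, rfl⟩
    exact ⟨⟨i, hi, m, hm, rfl⟩, add_mul_mod_of_lt hi m⟩

lemma card_filter_mod_justification (lam : Fin r → ℕ) {i : ℕ} (hi : i < t) :
    #{x ∈ justification r t lam | x % t = i} = aCount r t lam i := by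
  rw [filter_mod_justification lam hi, card_image_of_injective _ fun m m' h => ?_, card_range]
  exact Nat.eq_of_mul_eq_mul_right (Nat.zero_lt_of_lt hi) (Nat.add_left_cancel h)

lemma card_justification (lam : Fin r → ℕ) (ht : 0 < t) :
    #(justification r t lam) = #(betaSet r lam) := by
  rw [card_eq_sum_card_filter_mod ht, card_eq_sum_card_filter_mod ht (betaSet r lam)]
  exact sum_congr rfl fun i hi => card_filter_mod_justification lam (mem_range.mp hi)

namespace IsTCore

variable {ρ : Fin r → ℕ} (hcore : IsTCore r t ρ)
include hcore

lemma mem_of_add_mul_mem {b : ℕ} (k : ℕ) (hb : b + k * t ∈ betaSet r ρ) : b ∈ betaSet r ρ := by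
  induction k with
  | zero => simpa using hb
  | succ k ih =>
    apply ih
    simpa [add_mul, ← add_assoc] using
      hcore _ hb (le_add_left (Nat.le_mul_of_pos_left t k.succ_pos))

lemma div_lt_aCount (ht : 0 < t) {b : ℕ} (hb : b ∈ betaSet r ρ) :
    b / t < aCount r t ρ (b % t) := by
  have hsub : (range (b / t + 1)).image (b % t + · * t) ⊆ {x ∈ betaSet r ρ | x % t = b % t} := by
    intro x hx
    obtain ⟨m, hm, rfl⟩ := mem_image.mp hx
    refine mem_filter.mpr
      ⟨hcore.mem_of_add_mul_mem (b / t - m) ?_, add_mul_mod_of_lt (Nat.mod_lt b ht) m⟩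
    rwa [add_assoc, ← add_mul, Nat.add_sub_cancel' (Nat.lt_succ_iff.mp (mem_range.mp hm)),
      Nat.mod_add_div']
  have := card_le_card hsub
  rwa [card_image_of_injective _ fun m m' h =>
    Nat.eq_of_mul_eq_mul_right ht (Nat.add_left_cancel h), card_range] at this

lemma justification_eq (ht : 0 < t) : justification r t ρ = betaSet r ρ := by
  refine (eq_of_subset_of_card_le (fun b hb => ?_) (card_justification ρ ht).le).symm
  refine mem_biUnion.mpr ⟨b % t, mem_range.mpr (Nat.mod_lt b ht), mem_image.mpr
    ⟨b / t, mem_range.mpr (hcore.div_lt_aCount ht hb), ?_⟩⟩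
  rw [Nat.mul_comm]
  exact Nat.mod_add_div b t

lemma justification_eq_betaSet_iff (ht : 0 < t) (lam : Fin r → ℕ) :
    justification r t lam = betaSet r ρ ↔ ∀ i < t, aCount r t lam i = aCount r t ρ i := by
  rw [← hcore.justification_eq ht]
  refine ⟨fun h i hi => ?_, fun h => biUnion_congr rfl fun i hi => by rw [h i (mem_range.mp hi)]⟩
  rw [← card_filter_mod_justification lam hi, ← card_filter_mod_justification ρ hi, h]

end IsTCore

end Justification

theorem fixed_core_probability_limit_general (r t : ℕ) (ht : 2 ≤ t)
    (ρ : Fin r → ℕ) (hρ : IsRectPartition r (r * t) ρ) (hcore : IsTCore r t ρ) :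
    Filter.Tendsto
      (fun s : ℕ => ({lam : Fin r → ℕ | IsRectPartition r s lam ∧
          justification r t lam = betaSet r ρ}.ncard : ℝ) / ((r + s).choose r : ℝ))
      Filter.atTop
      (nhds ((1 / (t : ℝ) ^ r) *
        ((r.factorial : ℝ) / ∏ i ∈ Finset.range t, ((aCount r t ρ i).factorial : ℝ)))) := by
  have ht0 : 0 < t := by omega
  have hsum : ∑ i ∈ range t, aCount r t ρ i = r :=
    (card_eq_sum_card_filter_mod ht0 _).symm.trans (card_betaSet hρ.1)
  have hcount (s : ℕ) :
      {lam | IsRectPartition r s lam ∧ justification r t lam = betaSet r ρ}.ncard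
        = ∏ i ∈ range t, (#{x ∈ range (r + s) | x % t = i}).choose (aCount r t ρ i) := by
    simp_rw [hcore.justification_eq_betaSet_iff ht0]
    exact (ncard_isRectPartition_betaSet _).trans
      (card_filter_powersetCard_mod_card_eq ht0 _ hsum)
  have hN : Tendsto (fun s => r + s) atTop atTop :=
    tendsto_atTop_mono (Nat.le_add_left · r) tendsto_id
  have hlim := tendsto_prod_choose_div_choose (range t) (aCount r t ρ) hN
    fun i hi => (tendsto_card_filter_mod_div ht0 (mem_range.mp hi)).comp hN
  rw [hsum, prod_pow_eq_pow_sum, hsum, one_div_pow] at hlim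
  simpa only [hcount, Nat.cast_prod] using hlim

/-- For a fixed `t`-core `ρ ∈ Par_{r,rt}`, as `s → ∞`,
`#{λ ∈ Par_{r,s} : core_t(λ) = ρ} / C(r+s, r) → (1/t^r) · r!/(a_0! ⋯ a_{t−1}!)`.
Here `core_t(λ) = ρ` is expressed as `J(λ) = β(ρ)`. -/
theorem fixed_core_probability_limit (r t : ℕ) (hr : 1 ≤ r) (ht : 2 ≤ t)
    (ρ : Fin r → ℕ) (hρ : IsRectPartition r (r * t) ρ) (hcore : IsTCore r t ρ) :
    Filter.Tendsto
      (fun s : ℕ => ({lam : Fin r → ℕ | IsRectPartition r s lam ∧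
          justification r t lam = betaSet r ρ}.ncard : ℝ) / ((r + s).choose r : ℝ))
      Filter.atTop
      (nhds ((1 / (t : ℝ) ^ r) *
        ((r.factorial : ℝ) / ∏ i ∈ Finset.range t, ((aCount r t ρ i).factorial : ℝ)))) :=
  fixed_core_probability_limit_general r t ht ρ hρ hcore
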